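/- Let n ≥ 3, 1 ≤ u ≤ n and m ≥ 1. Let a = (a_1,…,a_n) ∈ R_n^n with a_u = 0 be an R_n-linear combination of the row vectors m(σ_i e_j − σ_j e_i) for i,j ≠ u with i ≠ j, σ_kμ_{k,m}(σ_i e_j − σ_j e_i) for i,j,k ≠ u with i ≠ j, and σ_kμ_{i,m}(σ_i e_j − σ_j e_i) for i,j,k ≠ u with i ≠ j and k ≠ j, where e_j denotes the j-th standard basis row vector. Then the matrix I_n + Σ_{v≠u} a_v E_{u,v}, which equals the identity except in the u-th row, lies in IA_n^m. -/

import Mathlib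

noncomputable section

open Matrix

/-- The Laurent polynomial ring `ℤ[x₁^{±1},…,x_n^{±1}]`, realized as the group
algebra of the free abelian group `ℤⁿ` over `ℤ`. -/
abbrev LaurentR (n : ℕ) : Type := AddMonoidAlgebra ℤ (Fin n →₀ ℤ)

/-- `x_i` as a unit of `LaurentR n`. -/
def Xu {n : ℕ} (i : Fin n) : (LaurentR n)ˣ where
  val := AddMonoidAlgebra.single (Finsupp.single i 1) 1
  inv := AddMonoidAlgebra.single (-Finsupp.single i 1) 1
  val_inv := by
    rw [AddMonoidAlgebra.single_mul_single]
    simp [AddMonoidAlgebra.one_def]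
  inv_val := by
    rw [AddMonoidAlgebra.single_mul_single]
    simp [AddMonoidAlgebra.one_def]

/-- `x_i` as an element of `LaurentR n`. -/
def Xv {n : ℕ} (i : Fin n) : LaurentR n := (Xu i : LaurentR n)

/-- `σ_i = x_i - 1`. -/
def sg {n : ℕ} (i : Fin n) : LaurentR n := Xv i - 1

/-- The vector `σ⃗`. -/
def sgVec (n : ℕ) : Fin n → LaurentR n := fun i => sg i

/-- `μ_{r,m} = 1 + x_r + ⋯ + x_r^{m-1}`. -/
def muv {n : ℕ} (r : Fin n) (m : ℕ) : LaurentR n := ∑ i ∈ Finset.range m, Xv r ^ i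

/-- The augmentation ideal `𝔄_n = Σ σ_i R_n`. -/
def augI (n : ℕ) : Ideal (LaurentR n) := Ideal.span (Set.range (sgVec n))

/-- The ideal `m·R_n`. -/
def OI (n m : ℕ) : Ideal (LaurentR n) := Ideal.span {(m : LaurentR n)}

/-- The ideal `H_{n,m} = Σ_r (x_r^m − 1)R_n + mR_n`. -/
def HI (n m : ℕ) : Ideal (LaurentR n) :=
  Ideal.span (Set.range (fun r : Fin n => Xv r ^ m - 1) ∪ {(m : LaurentR n)})

/-- `IA_n = {A ∈ GL_n(R_n) : A·σ⃗ = σ⃗}` as a subgroup of `GL_n(R_n)`. -/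
def IAn (n : ℕ) : Subgroup (GL (Fin n) (LaurentR n)) where
  carrier := {g | (g : Matrix (Fin n) (Fin n) (LaurentR n)) *ᵥ sgVec n = sgVec n}
  one_mem' := by simp
  mul_mem' := by
    intro a b ha hb
    simp only [Set.mem_setOf_eq, Units.val_mul] at *
    rw [← Matrix.mulVec_mulVec, hb, ha]
  inv_mem' := by
    intro a ha
    simp only [Set.mem_setOf_eq] at *
    have h : ((a⁻¹ : GL (Fin n) (LaurentR n)) : Matrix (Fin n) (Fin n) (LaurentR n)) *ᵥ
        ((a : Matrix (Fin n) (Fin n) (LaurentR n)) *ᵥ sgVec n) = sgVec n := by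
      rw [Matrix.mulVec_mulVec, ← Units.val_mul, inv_mul_cancel, Units.val_one,
        Matrix.one_mulVec]
    rw [ha] at h
    exact h

/-- The underlying matrix of an element of `IA_n`. -/
def matOf {n : ℕ} (g : IAn n) : Matrix (Fin n) (Fin n) (LaurentR n) :=
  ((g : GL (Fin n) (LaurentR n)) : Matrix (Fin n) (Fin n) (LaurentR n))

/-- The principal congruence subgroup `IG_{n,m}` (as a subset of `IA_n`). -/
def IGnm (n m : ℕ) : Set (IAn n) := {g | ∀ k l, (matOf g - 1) k l ∈ HI n m}

/-- `IA_n^m`: the subgroup of `IA_n` generated by all `m`-th powers. -/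
def IApow (n m : ℕ) : Subgroup (IAn n) := Subgroup.closure (Set.range fun g : IAn n => g ^ m)


/-- `ISL_{n−1,i}(H)` for `n = k+1`: elements `I + A` of `IA_n` whose `i`-th row of `A`
vanishes, all entries of the minor `A_{i,i}` lie in `σ_iR_n ∩ H`, and
`det(I_{n−1} + A_{i,i}) = 1`. -/
def ISL {k : ℕ} (i : Fin (k + 1)) (H : Ideal (LaurentR (k + 1))) : Set (IAn (k + 1)) :=
  {g | (∀ l, (matOf g - 1) i l = 0) ∧
    (∀ a b : Fin k, (matOf g - 1) (i.succAbove a) (i.succAbove b) ∈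
      Ideal.span {sg i} ⊓ H) ∧
    ((matOf g).submatrix i.succAbove i.succAbove).det = 1}

/-- `IGL_{n−1,i}` for `n = k+1`: elements `I + A` of `IA_n` whose `i`-th row of `A`
vanishes and all entries of the minor `A_{i,i}` lie in `σ_iR_n`. -/
def IGLset {k : ℕ} (i : Fin (k + 1)) : Set (IAn (k + 1)) :=
  {g | (∀ l, (matOf g - 1) i l = 0) ∧
    ∀ a b : Fin k, (matOf g - 1) (i.succAbove a) (i.succAbove b) ∈ Ideal.span {sg i}}

/-- The elementary matrix `I_d + r·E_{a,b}` (`a ≠ b`) as an element of `GL_d(A)`. -/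
def elemGL {d : ℕ} {A : Type*} [CommRing A] (a b : Fin d) (hab : a ≠ b) (r : A) :
    GL (Fin d) A where
  val := 1 + Matrix.single a b r
  inv := 1 - Matrix.single a b r
  val_inv := by
    have h2 : Matrix.single a b r * Matrix.single a b r = 0 :=
      Matrix.single_mul_single_of_ne (i := a) (j := b) (k := a) (h := hab.symm) (c := r) (d := r)
    rw [mul_sub, mul_one, add_mul, one_mul, h2]
    abel
  inv_val := by
    have h2 : Matrix.single a b r * Matrix.single a b r = 0 :=
      Matrix.single_mul_single_of_ne (i := a) (j := b) (k := a) (h := hab.symm) (c := r) (d := r)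
    rw [sub_mul, one_mul, mul_add, mul_one, h2]
    abel

/-- `E_d(A)`: the subgroup generated by the elementary matrices. -/
def Egrp (d : ℕ) (A : Type*) [CommRing A] : Subgroup (GL (Fin d) A) :=
  Subgroup.closure {g | ∃ (a b : Fin d) (hab : a ≠ b) (r : A), g = elemGL a b hab r}

/-- `E_d(A,H)`: the normal closure in `E_d(A)` of the elementary matrices with
parameter in the ideal `H`. -/
def EgrpRel (d : ℕ) (A : Type*) [CommRing A] (H : Ideal A) : Subgroup (GL (Fin d) A) :=
  Subgroup.closure {g | ∃ e ∈ Egrp d A, ∃ (a b : Fin d) (hab : a ≠ b), ∃ r ∈ H,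
    g = e * elemGL a b hab r * e⁻¹}

/-- The generic column ideal used in the definitions of `J_{m,u,v}` and `J̃_{m,u,v}`
(with 1-indexed `u ∈ {0,…,n}` and `v` a 0-indexed column, so "`v ≤ u`" reads
`v.val < u`).  `lead` is the leading factor (`𝔄̃_u` resp. `𝔄_n`). -/
def colIdeal (n m u : ℕ) (lead : Ideal (LaurentR n)) (v : Fin n) : Ideal (LaurentR n) :=
  lead * ((∑ r : Fin n, if r.val < u then augI n * Ideal.span {sg r * muv r m} else 0)
      + augI n * OI n m + OI n m ^ 2)
    + (if v.val < u then
        ∑ r : Fin n, if u ≤ r.val then Ideal.span {sg r ^ 3 * muv r m} else 0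
      else
        (∑ r : Fin n, if u ≤ r.val ∧ r ≠ v then Ideal.span {sg r ^ 3 * muv r m} else 0)
          + augI n * Ideal.span {sg v ^ 2 * muv v m})

/-- `𝔄̃_u = Σ_{r=u+1}^n σ_rR_n` (1-indexed `u`). -/
def augTil (n u : ℕ) : Ideal (LaurentR n) :=
  Ideal.span {x | ∃ r : Fin n, u ≤ r.val ∧ x = sg r}

/-- The ideal `J̃_{m,u,v}`. -/
def Jtil (n m u : ℕ) (v : Fin n) : Ideal (LaurentR n) := colIdeal n m u (augTil n u) v

/-- The ideal `J_{m,u,v}`. -/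
def Jfull (n m u : ℕ) (v : Fin n) : Ideal (LaurentR n) := colIdeal n m u (augI n) v

/-- The determinant condition `det = ∏_r x_r^{s_r·m²}`. -/
def detMon (n m : ℕ) (g : IAn n) : Prop :=
  ∃ s : Fin n → ℤ,
    (matOf g).det = ∏ r : Fin n, ((Xu r ^ (s r * (m : ℤ) ^ 2) : (LaurentR n)ˣ) : LaurentR n)

/-- The set `𝕁̃_{m,u}`. -/
def JmatTil (n m u : ℕ) : Set (IAn n) :=
  {g | (∀ k v, (matOf g - 1) k v ∈ Jtil n m u v) ∧ detMon n m g}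

/-- The set `𝕁_{m,u}`. -/
def JmatFull (n m u : ℕ) : Set (IAn n) :=
  {g | (∀ k v, (matOf g - 1) k v ∈ Jfull n m u v) ∧ detMon n m g}

/-- The ideal `J_m = Σ_r σ_r³μ_{r,m}R_n + 𝔄_n²·mR_n + 𝔄_n·m²R_n`. -/
def JmI (n m : ℕ) : Ideal (LaurentR n) :=
  Ideal.span (Set.range fun r : Fin n => sg r ^ 3 * muv r m)
    + augI n ^ 2 * OI n m + augI n * OI n (m ^ 2)

/-- The free metabelian group `Φ_n = F_n/F_n''`. -/
instance derivedSeries_normal' (G : Type*) [Group G] (n : ℕ) : (derivedSeries G n).Normal :=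
  derivedSeries_normal _ _

def Phi (n : ℕ) : Type := FreeGroup (Fin n) ⧸ derivedSeries (FreeGroup (Fin n)) 2

instance (n : ℕ) : Group (Phi n) :=
  inferInstanceAs (Group (FreeGroup (Fin n) ⧸ derivedSeries (FreeGroup (Fin n)) 2))

/-! Write `E_u v` for the matrix whose `u`-th row is `v` and whose other rows vanish. Since
`(I + E_u v)(I + E_u w) = I + E_u (v + (1 + v_u) w)`, the rows `v` with `v_u = 0` and
`I + E_u v ∈ IA_n^m` form an additive monoid, so it suffices to treat `r • w` for each generator
`w`; each of these is `m • c` or `μ_{k,m} • c` (`k ≠ u`) for a multiple `c` of a syzygy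
`σ_i e_j − σ_j e_i`, so `c_u = 0` and `c · σ⃗ = 0`. Then `I + E_u (m c) = (I + E_u c)^m`. For
`μ_{k,m} c`, take `g = I + E_u (σ_k e_u − σ_u e_k)`, whose `(u,u)`-entry is `x_k`, and
`h = I + E_u (x_k⁻¹ (c − σ_k e_u + σ_u e_k))`; the identity `x^m μ_m(x⁻¹) x⁻¹ = μ_m(x)` gives
`g^m h^m = I + E_u (μ_{k,m} c)`. -/

namespace Matrix

variable {ι R : Type*} [DecidableEq ι] [CommRing R]

def singleRow (u : ι) (v : ι → R) : Matrix ι ι R := vecMulVec (Pi.single u 1) v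

theorem singleRow_apply (u : ι) (v : ι → R) (p q : ι) :
    singleRow u v p q = if p = u then v q else 0 := by
  simp [singleRow, vecMulVec_apply, Pi.single_apply]

theorem singleRow_mul_singleRow [Fintype ι] (u : ι) (v w : ι → R) :
    singleRow u v * singleRow u w = singleRow u (v u • w) := by
  simp [singleRow, vecMulVec_mul_vecMulVec, dotProduct_single]

theorem one_add_singleRow_mul [Fintype ι] (u : ι) (v w : ι → R) :
    (1 + singleRow u v) * (1 + singleRow u w) = 1 + singleRow u (v + (1 + v u) • w) := by
  rw [add_mul, mul_add, mul_add, singleRow_mul_singleRow]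
  simp only [singleRow, one_mul, mul_one, add_smul, one_smul, vecMulVec_add, vecMulVec_smul]
  abel

theorem one_add_singleRow_pow [Fintype ι] (u : ι) (v : ι → R) (t : ℕ) :
    (1 + singleRow u v) ^ t = 1 + singleRow u ((∑ s ∈ Finset.range t, (1 + v u) ^ s) • v) := by
  induction t with
  | zero => simp [singleRow]
  | succ t ih =>
    have hα : 1 + (∑ s ∈ Finset.range t, (1 + v u) ^ s) * v u = (1 + v u) ^ t := by
      linear_combination geom_sum_mul (1 + v u) t
    rw [pow_succ, ih, one_add_singleRow_mul, Pi.smul_apply, smul_eq_mul, hα,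
      Finset.sum_range_succ, add_smul]

theorem det_one_add_singleRow [Fintype ι] (u : ι) (v : ι → R) :
    det (1 + singleRow u v) = 1 + v u := by
  rw [singleRow, vecMulVec_eq Unit, det_one_add_replicateCol_mul_replicateRow, dotProduct_single,
    mul_one]

theorem one_add_singleRow_mulVec [Fintype ι] {u : ι} {v s : ι → R} (hv : v ⬝ᵥ s = 0) :
    (1 + singleRow u v) *ᵥ s = s := by
  simp [add_mulVec, singleRow, vecMulVec_mulVec, hv]

theorem single_sub_single_dotProduct_self [Fintype ι] (s : ι → R) (i j : ι) :
    (Pi.single j (s i) - Pi.single i (s j)) ⬝ᵥ s = 0 := by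
  rw [sub_dotProduct, single_dotProduct, single_dotProduct, mul_comm, sub_self]

end Matrix

theorem pow_mul_geom_sum_mul_of_mul_eq_one {R : Type*} [CommRing R] {x y : R} (hxy : x * y = 1)
    (m : ℕ) : x ^ m * (∑ s ∈ Finset.range m, y ^ s) * y = ∑ s ∈ Finset.range m, x ^ s := by
  induction m with
  | zero => simp
  | succ m ih =>
    have hpow : x ^ (m + 1) * y ^ (m + 1) = 1 := by rw [← mul_pow, hxy, one_pow]
    rw [Finset.sum_range_succ (fun s => y ^ s), geom_sum_succ (x := x)]
    linear_combination hpow + x * ih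

section RowElements

variable {n : ℕ}

def IAn.ofSingleRow (u : Fin n) (v : Fin n → LaurentR n) (hunit : IsUnit (1 + v u))
    (hv : v ⬝ᵥ sgVec n = 0) : IAn n :=
  ⟨((isUnit_iff_isUnit_det _).2 (by rwa [det_one_add_singleRow])).unit,
    one_add_singleRow_mulVec hv⟩

theorem matOf_ofSingleRow (u : Fin n) (v : Fin n → LaurentR n) (hunit : IsUnit (1 + v u))
    (hv : v ⬝ᵥ sgVec n = 0) : matOf (IAn.ofSingleRow u v hunit hv) = 1 + singleRow u v :=
  rfl

theorem matOf_one : matOf (1 : IAn n) = 1 := rfl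

theorem matOf_mul (g h : IAn n) : matOf (g * h) = matOf g * matOf h := rfl

theorem matOf_pow (g : IAn n) (t : ℕ) : matOf (g ^ t) = matOf g ^ t := by
  simp [matOf]

def syzygy (i j : Fin n) : Fin n → LaurentR n := Pi.single j (sg i) - Pi.single i (sg j)

theorem syzygy_dotProduct_sgVec (i j : Fin n) : syzygy i j ⬝ᵥ sgVec n = 0 :=
  single_sub_single_dotProduct_self (sgVec n) i j

theorem smul_syzygy_apply_of_ne (t : LaurentR n) {i j u : Fin n} (hi : i ≠ u) (hj : j ≠ u) :
    (t • syzygy i j) u = 0 := by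
  simp [syzygy, Pi.single_eq_of_ne hi.symm, Pi.single_eq_of_ne hj.symm]

theorem smul_syzygy_dotProduct_sgVec (t : LaurentR n) (i j : Fin n) :
    (t • syzygy i j) ⬝ᵥ sgVec n = 0 := by
  rw [smul_dotProduct, syzygy_dotProduct_sgVec, smul_zero]

theorem pow_mem_IApow (m : ℕ) (g : IAn n) : g ^ m ∈ IApow n m :=
  Subgroup.subset_closure ⟨g, rfl⟩

def rowsInIApow (m : ℕ) (u : Fin n) : AddSubmonoid (Fin n → LaurentR n) where
  carrier := {v | v u = 0 ∧ ∃ g ∈ IApow n m, matOf g = 1 + singleRow u v}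
  zero_mem' := ⟨rfl, 1, one_mem _, by simp [matOf_one, singleRow]⟩
  add_mem' := by
    rintro v w ⟨hvu, g, hg, hgv⟩ ⟨hwu, h, hh, hhw⟩
    refine ⟨by simp [hvu, hwu], g * h, mul_mem hg hh, ?_⟩
    rw [matOf_mul, hgv, hhw, one_add_singleRow_mul, hvu, add_zero, one_smul]

theorem natCast_smul_mem_rowsInIApow (m : ℕ) {u : Fin n} {c : Fin n → LaurentR n}
    (hcu : c u = 0) (hc : c ⬝ᵥ sgVec n = 0) : (m : LaurentR n) • c ∈ rowsInIApow m u := by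
  refine ⟨by simp [hcu], IAn.ofSingleRow u c (by simp [hcu]) hc ^ m, pow_mem_IApow m _, ?_⟩
  rw [matOf_pow, matOf_ofSingleRow, one_add_singleRow_pow]
  simp [hcu]

theorem muv_smul_mem_rowsInIApow (m : ℕ) {u i : Fin n} (hiu : i ≠ u) {c : Fin n → LaurentR n}
    (hcu : c u = 0) (hc : c ⬝ᵥ sgVec n = 0) : muv i m • c ∈ rowsInIApow m u := by
  set y : LaurentR n := ↑(Xu i)⁻¹
  have hxy : Xv i * y = 1 := (Xu i).mul_inv
  have hyx : y * Xv i = 1 := (Xu i).inv_mul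
  have hx : 1 + sg i = Xv i := by rw [sg, add_sub_cancel]
  set vg := syzygy i u
  have hvgu : vg u = sg i := by simp [vg, syzygy, Pi.single_eq_of_ne hiu.symm]
  have hvg : vg ⬝ᵥ sgVec n = 0 := syzygy_dotProduct_sgVec i u
  set vh : Fin n → LaurentR n := y • (c - vg)
  have hvhu : 1 + vh u = y := by
    simp only [vh, Pi.smul_apply, Pi.sub_apply, hcu, hvgu, smul_eq_mul, sg]
    linear_combination -hyx
  have hvh : vh ⬝ᵥ sgVec n = 0 := by
    rw [smul_dotProduct, sub_dotProduct, hc, hvg, sub_self, smul_zero]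
  let g := IAn.ofSingleRow u vg (by rw [hvgu, hx]; exact (Xu i).isUnit) hvg
  let h := IAn.ofSingleRow u vh (by rw [hvhu]; exact (Xu i)⁻¹.isUnit) hvh
  refine ⟨by simp [hcu], g ^ m * h ^ m, mul_mem (pow_mem_IApow _ _) (pow_mem_IApow _ _), ?_⟩
  rw [matOf_mul, matOf_pow, matOf_pow, matOf_ofSingleRow, matOf_ofSingleRow,
    one_add_singleRow_pow, one_add_singleRow_pow, one_add_singleRow_mul, hvhu, hvgu, hx]
  congr 2
  funext q
  simp only [Pi.add_apply, Pi.smul_apply, smul_eq_mul, hvgu, muv, vh, Pi.sub_apply, sg]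
  linear_combination (c q - vg q) * (pow_mul_geom_sum_mul_of_mul_eq_one hxy m
    + (∑ s ∈ Finset.range m, y ^ s) * y * geom_sum_mul (Xv i) m)

def elemGenerators (n m : ℕ) (u : Fin n) : Set (Fin n → LaurentR n) :=
  {v : Fin n → LaurentR n | ∃ i j : Fin n, i ≠ u ∧ j ≠ u ∧ i ≠ j ∧
      v = (m : LaurentR n) • syzygy i j} ∪
    {v : Fin n → LaurentR n | ∃ i j k : Fin n, i ≠ u ∧ j ≠ u ∧ k ≠ u ∧ i ≠ j ∧
      v = (sg k * muv k m) • syzygy i j} ∪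
    {v : Fin n → LaurentR n | ∃ i j k : Fin n, i ≠ u ∧ j ≠ u ∧ k ≠ u ∧ i ≠ j ∧ k ≠ j ∧
      v = (sg k * muv i m) • syzygy i j}

theorem smul_mem_rowsInIApow_of_mem_elemGenerators {m : ℕ} {u : Fin n} (r : LaurentR n)
    {x : Fin n → LaurentR n} (hx : x ∈ elemGenerators n m u) : r • x ∈ rowsInIApow m u := by
  rcases hx with (⟨i, j, hi, hj, -, rfl⟩ | ⟨i, j, k, hi, hj, hk, -, rfl⟩) |
    ⟨i, j, k, hi, hj, -, -, -, rfl⟩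
  · rw [smul_comm]
    exact natCast_smul_mem_rowsInIApow m (smul_syzygy_apply_of_ne r hi hj)
      (smul_syzygy_dotProduct_sgVec r i j)
  · rw [smul_smul, show r * (sg k * muv k m) = muv k m * (r * sg k) by ring, ← smul_smul]
    exact muv_smul_mem_rowsInIApow m hk (smul_syzygy_apply_of_ne _ hi hj)
      (smul_syzygy_dotProduct_sgVec _ i j)
  · rw [smul_smul, show r * (sg k * muv i m) = muv i m * (r * sg k) by ring, ← smul_smul]
    exact muv_smul_mem_rowsInIApow m hi (smul_syzygy_apply_of_ne _ hi hj)
      (smul_syzygy_dotProduct_sgVec _ i j)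

end RowElements

theorem statement_11_general (n m : ℕ) (u : Fin n)
    (a : Fin n → LaurentR n)
    (ha : a ∈ Submodule.span (LaurentR n)
      ({v : Fin n → LaurentR n | ∃ i j : Fin n, i ≠ u ∧ j ≠ u ∧ i ≠ j ∧
          v = (m : LaurentR n) • (Pi.single j (sg i) - Pi.single i (sg j))} ∪
       {v : Fin n → LaurentR n | ∃ i j k : Fin n, i ≠ u ∧ j ≠ u ∧ k ≠ u ∧ i ≠ j ∧
          v = (sg k * muv k m) • (Pi.single j (sg i) - Pi.single i (sg j))} ∪
       {v : Fin n → LaurentR n | ∃ i j k : Fin n, i ≠ u ∧ j ≠ u ∧ k ≠ u ∧ i ≠ j ∧ k ≠ j ∧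
          v = (sg k * muv i m) • (Pi.single j (sg i) - Pi.single i (sg j))})) :
    ∃ g : IAn n, g ∈ IApow n m ∧
      matOf g = 1 + Matrix.of (fun p q : Fin n => if p = u then a q else 0) := by
  obtain ⟨-, g, hg, hga⟩ : a ∈ rowsInIApow m u :=
    Submodule.closure_induction (zero_mem _) (fun _ _ _ _ => add_mem)
      (fun r _ hx => smul_mem_rowsInIApow_of_mem_elemGenerators r hx) ha
  refine ⟨g, hg, hga.trans ?_⟩
  ext p q
  simp [singleRow_apply]

/-- (Elementary elements of type 1.)  For `n ≥ 3`, `u`, `m ≥ 1`, if the row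
vector `a` (with `a_u = 0`) is an `R_n`-linear combination of the vectors
`m(σ_ie_j − σ_je_i)` (`i,j ≠ u`, `i ≠ j`), `σ_kμ_{k,m}(σ_ie_j − σ_je_i)` (`i,j,k ≠ u`,
`i ≠ j`) and `σ_kμ_{i,m}(σ_ie_j − σ_je_i)` (`i,j,k ≠ u`, `i ≠ j`, `k ≠ j`), then the matrix
equal to the identity except for the row `a` in the `u`-th row lies in `IA_n^m`. -/
theorem statement_11 (n m : ℕ) (hn : 3 ≤ n) (hm : 1 ≤ m) (u : Fin n)
    (a : Fin n → LaurentR n) (hau : a u = 0)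
    (ha : a ∈ Submodule.span (LaurentR n)
      ({v : Fin n → LaurentR n | ∃ i j : Fin n, i ≠ u ∧ j ≠ u ∧ i ≠ j ∧
          v = (m : LaurentR n) • (Pi.single j (sg i) - Pi.single i (sg j))} ∪
       {v : Fin n → LaurentR n | ∃ i j k : Fin n, i ≠ u ∧ j ≠ u ∧ k ≠ u ∧ i ≠ j ∧
          v = (sg k * muv k m) • (Pi.single j (sg i) - Pi.single i (sg j))} ∪
       {v : Fin n → LaurentR n | ∃ i j k : Fin n, i ≠ u ∧ j ≠ u ∧ k ≠ u ∧ i ≠ j ∧ k ≠ j ∧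
          v = (sg k * muv i m) • (Pi.single j (sg i) - Pi.single i (sg j))})) :
    ∃ g : IAn n, g ∈ IApow n m ∧
      matOf g = 1 + Matrix.of (fun p q : Fin n => if p = u then a q else 0) :=
  statement_11_general n m u a ha
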